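/- Let $\mathcal{X}$ be a $d$-dimensional tropical fan (weighted balanced fan) with unimodular fan structure, and $\sigma$ a maximal cone with primitive ray generators $v_1,\ldots,v_d$ and weight $\omega(\sigma)$. Then the iterated intersection product $\Psi_{v_1}\cdots\Psi_{v_d}\cdot\mathcal{X}$ equals the origin with weight $\omega(\sigma)$. -/

import Mathlib

/-- The real vector associated to the primitive integral generator of the `i`-th ray. -/
def rayR (n m : ℕ) (v : Fin m → Fin n → ℤ) (i : Fin m) : Fin n → ℝ :=
  fun t => (v i t : ℝ)

/-- The cone spanned by the rays indexed by `S`. -/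
def coneOf (n m : ℕ) (v : Fin m → Fin n → ℤ) (S : Finset (Fin m)) : Set (Fin n → ℝ) :=
  {x | ∃ a : Fin m → ℝ, (∀ i, 0 ≤ a i) ∧ x = ∑ i ∈ S, a i • rayR n m v i}

/-- One step of the tropical intersection product: intersecting the weighted fan with
weight function `W` with a rational function whose linear parts on the cones are given
by `L`; the weight of the cone `τ` in the intersection is
`∑_{σ>τ} W(σ)·L_σ(v_{σ/τ}) - L_τ(∑_{σ>τ} W(σ)·v_{σ/τ})`, the normal vectors of the
unimodular fan being represented by the primitive ray generators. -/
def stepW (n m : ℕ) (v : Fin m → Fin n → ℤ) (C : Finset (Finset (Fin m)))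
    (L : Finset (Fin m) → ((Fin n → ℝ) →ₗ[ℝ] ℝ)) (W : Finset (Fin m) → ℝ) :
    Finset (Fin m) → ℝ :=
  fun τ =>
    (∑ j ∈ Finset.univ.filter (fun j => j ∉ τ ∧ insert j τ ∈ C),
      W (insert j τ) * L (insert j τ) (rayR n m v j)) -
    L τ (∑ j ∈ Finset.univ.filter (fun j => j ∉ τ ∧ insert j τ ∈ C),
      W (insert j τ) • rayR n m v j)

/-!
Intersecting with a Courant function `Ψ_{v_i}` lowers the dimension of a balanced weighted fan
by one and keeps it balanced. Since `Ψ_{v_i}` is `1` on `v_i` and `0` on the other rays, the new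
weight of a cone `τ ∌ i` is `ω(τ ∪ {i}) - Ψ_τ(∑_{σ>τ} ω(σ) v_{σ/τ})`, and the correction term
vanishes because the sum lies in `span τ`, on which `Ψ_τ` is zero. Hence along the chain
`∅ ⊂ {ι 0} ⊂ {ι 0, ι 1} ⊂ ⋯ ⊂ σ` the weight `ω(σ)` is carried down to the origin.
-/

def coverRays (m : ℕ) (C : Finset (Finset (Fin m))) (τ : Finset (Fin m)) : Finset (Fin m) :=
  Finset.univ.filter fun j => j ∉ τ ∧ insert j τ ∈ C

def spanRays (n m : ℕ) (v : Fin m → Fin n → ℤ) (τ : Finset (Fin m)) :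
    Submodule ℝ (Fin n → ℝ) :=
  Submodule.span ℝ (Set.range fun i : {x // x ∈ τ} => rayR n m v i.1)

def balancingSum (n m : ℕ) (v : Fin m → Fin n → ℤ) (C : Finset (Finset (Fin m)))
    (W : Finset (Fin m) → ℝ) (τ : Finset (Fin m)) : Fin n → ℝ :=
  ∑ j ∈ coverRays m C τ, W (insert j τ) • rayR n m v j

def IsBalancedAt (n m : ℕ) (v : Fin m → Fin n → ℤ) (C : Finset (Finset (Fin m)))
    (W : Finset (Fin m) → ℝ) (τ : Finset (Fin m)) : Prop :=
  balancingSum n m v C W τ ∈ spanRays n m v τ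

/-- `L T` is the linear part on the cone `T` of the Courant function `Ψ_{v_i}`. -/
def IsCourant (n m : ℕ) (v : Fin m → Fin n → ℤ) (C : Finset (Finset (Fin m))) (i : Fin m)
    (L : Finset (Fin m) → ((Fin n → ℝ) →ₗ[ℝ] ℝ)) : Prop :=
  ∀ T ∈ C, ∀ j ∈ T, L T (rayR n m v j) = if j = i then 1 else 0

section

variable {n m : ℕ} {v : Fin m → Fin n → ℤ} {C : Finset (Finset (Fin m))}

theorem mem_coverRays {τ : Finset (Fin m)} {j : Fin m} :
    j ∈ coverRays m C τ ↔ j ∉ τ ∧ insert j τ ∈ C := by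
  simp [coverRays]

theorem mem_coverRays_insert_comm (hdown : ∀ S ∈ C, ∀ T ⊆ S, T ∈ C) {τ : Finset (Fin m)}
    {j k : Fin m} (hj : j ∈ coverRays m C τ) (hk : k ∈ coverRays m C (insert j τ)) :
    k ∈ coverRays m C τ ∧ j ∈ coverRays m C (insert k τ) := by
  simp only [mem_coverRays, Finset.mem_insert, not_or] at *
  refine ⟨⟨hk.1.2, hdown _ hk.2 _ (Finset.insert_subset_insert _ (Finset.subset_insert _ _))⟩,
    ?_, by rw [Finset.insert_comm]; exact hk.2⟩
  exact ⟨Ne.symm hk.1.1, hj.1⟩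

theorem sum_coverRays_coverRays_comm (hdown : ∀ S ∈ C, ∀ T ⊆ S, T ∈ C)
    {M : Type*} [AddCommMonoid M] (τ : Finset (Fin m)) (F : Fin m → Fin m → M) :
    ∑ j ∈ coverRays m C τ, ∑ k ∈ coverRays m C (insert j τ), F j k =
      ∑ j ∈ coverRays m C τ, ∑ k ∈ coverRays m C (insert j τ), F k j :=
  Finset.sum_comm' fun _ _ =>
    ⟨fun h => (mem_coverRays_insert_comm hdown h.1 h.2).symm,
      fun h => mem_coverRays_insert_comm hdown h.2 h.1⟩

theorem sum_map_balancingSum_smul (hdown : ∀ S ∈ C, ∀ T ⊆ S, T ∈ C)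
    (W : Finset (Fin m) → ℝ) (τ : Finset (Fin m)) (φ : (Fin n → ℝ) →ₗ[ℝ] ℝ) :
    ∑ j ∈ coverRays m C τ, φ (balancingSum n m v C W (insert j τ)) • rayR n m v j =
      ∑ j ∈ coverRays m C τ, φ (rayR n m v j) • balancingSum n m v C W (insert j τ) := by
  simp only [balancingSum, map_sum, map_smul, smul_eq_mul, Finset.sum_smul, Finset.smul_sum]
  rw [sum_coverRays_coverRays_comm hdown]
  refine Finset.sum_congr rfl fun j _ => Finset.sum_congr rfl fun k _ => ?_
  rw [Finset.insert_comm, mul_comm, smul_smul]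

theorem sum_ite_mem_coverRays_smul (hdown : ∀ S ∈ C, ∀ T ⊆ S, T ∈ C)
    (W : Finset (Fin m) → ℝ) (τ : Finset (Fin m)) (i : Fin m) :
    ∑ j ∈ coverRays m C τ,
        (if i ∈ coverRays m C (insert j τ) then W (insert i (insert j τ)) • rayR n m v j else 0) =
      if i ∈ coverRays m C τ then balancingSum n m v C W (insert i τ) else 0 := by
  calc _ = ∑ j ∈ coverRays m C τ, ∑ k ∈ coverRays m C (insert j τ),
        if k = i then W (insert k (insert j τ)) • rayR n m v j else 0 := by
        refine Finset.sum_congr rfl fun j _ => ?_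
        rw [Finset.sum_ite_eq']
    _ = ∑ j ∈ coverRays m C τ, if j = i then balancingSum n m v C W (insert j τ) else 0 := by
        rw [sum_coverRays_coverRays_comm hdown]
        refine Finset.sum_congr rfl fun j _ => ?_
        split_ifs with h
        · simp only [balancingSum, h, Finset.insert_comm]
        · exact Finset.sum_const_zero
    _ = _ := Finset.sum_ite_eq' _ _ _

theorem exists_sub_smul_mem_spanRays {j : Fin m} {τ : Finset (Fin m)} {x : Fin n → ℝ}
    (hx : x ∈ spanRays n m v (insert j τ)) :
    ∃ c : ℝ, x - c • rayR n m v j ∈ spanRays n m v τ := by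
  have hrange : (Set.range fun i : {x // x ∈ insert j τ} => rayR n m v i.1) =
      insert (rayR n m v j) (Set.range fun i : {x // x ∈ τ} => rayR n m v i.1) := by
    ext
    simp [eq_comm]
  rw [spanRays, hrange, Submodule.mem_span_insert] at hx
  obtain ⟨c, z, hz, rfl⟩ := hx
  exact ⟨c, by rwa [add_sub_cancel_left]⟩

namespace IsCourant

variable {i : Fin m} {L : Finset (Fin m) → ((Fin n → ℝ) →ₗ[ℝ] ℝ)}

theorem apply_eq_of_subset (hL : IsCourant n m v C i L) {S T : Finset (Fin m)} (hS : S ∈ C)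
    (hT : T ∈ C) (hST : S ⊆ T) {x : Fin n → ℝ} (hx : x ∈ spanRays n m v S) :
    L T x = L S x := by
  refine LinearMap.eqOn_span ?_ hx
  rintro _ ⟨⟨j, hj⟩, rfl⟩
  rw [hL T hT j (hST hj), hL S hS j hj]

theorem apply_eq_zero (hL : IsCourant n m v C i L) {τ : Finset (Fin m)} (hτ : τ ∈ C)
    (hi : i ∉ τ) {x : Fin n → ℝ} (hx : x ∈ spanRays n m v τ) : L τ x = 0 := by
  refine LinearMap.eqOn_span (g := 0) ?_ hx
  rintro _ ⟨⟨j, hj⟩, rfl⟩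
  rw [hL τ hτ j hj, if_neg (ne_of_mem_of_not_mem hj hi), LinearMap.zero_apply]

theorem stepW_eq (hL : IsCourant n m v C i L) (W : Finset (Fin m) → ℝ) (τ : Finset (Fin m)) :
    stepW n m v C L W τ =
      (if i ∈ coverRays m C τ then W (insert i τ) else 0) - L τ (balancingSum n m v C W τ) := by
  rw [← Finset.sum_ite_eq' (coverRays m C τ) i fun j => W (insert j τ)]
  refine congrArg₂ _ (Finset.sum_congr rfl fun j hj => ?_) rfl
  rw [hL _ (mem_coverRays.1 hj).2 j (Finset.mem_insert_self j τ)]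
  split_ifs <;> simp

theorem isBalancedAt_stepW (hdown : ∀ S ∈ C, ∀ T ⊆ S, T ∈ C) (hL : IsCourant n m v C i L)
    {W : Finset (Fin m) → ℝ} {τ : Finset (Fin m)} (hτ : τ ∈ C)
    (hW : ∀ j ∈ coverRays m C τ, IsBalancedAt n m v C W (insert j τ)) :
    IsBalancedAt n m v C (stepW n m v C L W) τ := by
  -- Write `s j = c j • v j + r j` with `r j ∈ span τ`: the `c i • v i` terms cancel, and the
  -- symmetry of the double sum over the cones two steps above `τ` turns the rest into a
  -- combination of the `r j`.
  choose! c hc using fun j hj => exists_sub_smul_mem_spanRays (hW j hj)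
  set s := fun j => balancingSum n m v C W (insert j τ)
  set r := fun j => s j - c j • rayR n m v j
  have hstep : ∀ j ∈ coverRays m C τ, stepW n m v C L W (insert j τ) =
      (if i ∈ coverRays m C (insert j τ) then W (insert i (insert j τ)) else 0) -
        (c j * (if j = i then 1 else 0) + L τ (r j)) := by
    intro j hj
    have hjC := (mem_coverRays.1 hj).2
    rw [hL.stepW_eq, show balancingSum n m v C W (insert j τ) = c j • rayR n m v j + r j by
      simp [r, s], map_add, map_smul, hL _ hjC j (Finset.mem_insert_self j τ),
      hL.apply_eq_of_subset hτ hjC (Finset.subset_insert j τ) (hc j hj), smul_eq_mul]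
  have hswap : ∑ j ∈ coverRays m C τ, L τ (r j) • rayR n m v j =
      ∑ j ∈ coverRays m C τ, L τ (rayR n m v j) • r j := by
    simp only [r, map_sub, map_smul, smul_eq_mul, sub_smul, smul_sub, Finset.sum_sub_distrib]
    rw [sum_map_balancingSum_smul hdown]
    congr 1
    refine Finset.sum_congr rfl fun j _ => ?_
    rw [smul_smul, mul_comm]
  have hsum : balancingSum n m v C (stepW n m v C L W) τ =
      (if i ∈ coverRays m C τ then r i else 0) -
        ∑ j ∈ coverRays m C τ, L τ (rayR n m v j) • r j := by
    rw [balancingSum, Finset.sum_congr rfl fun j hj => by rw [hstep j hj]]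
    simp only [sub_smul, add_smul, Finset.sum_sub_distrib, Finset.sum_add_distrib, mul_ite,
      mul_one, mul_zero, ite_smul, zero_smul]
    rw [sum_ite_mem_coverRays_smul hdown, Finset.sum_ite_eq', hswap]
    split_ifs <;> simp [r, s, sub_sub]
  rw [IsBalancedAt, hsum]
  refine Submodule.sub_mem _ ?_ (Submodule.sum_mem _ fun j hj => Submodule.smul_mem _ _ (hc j hj))
  split_ifs with hi
  · exact hc i hi
  · exact Submodule.zero_mem _

end IsCourant

theorem isBalancedAt_foldr_stepW (hdown : ∀ S ∈ C, ∀ T ⊆ S, T ∈ C)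
    (l : List (Fin m × (Finset (Fin m) → ((Fin n → ℝ) →ₗ[ℝ] ℝ))))
    (hl : ∀ p ∈ l, IsCourant n m v C p.1 p.2) {W : Finset (Fin m) → ℝ} {τ : Finset (Fin m)}
    (hτ : τ ∈ C)
    (hW : ∀ ρ ∈ C, τ ⊆ ρ → ρ.card = τ.card + l.length → IsBalancedAt n m v C W ρ) :
    IsBalancedAt n m v C ((l.map Prod.snd).foldr (stepW n m v C) W) τ := by
  induction l generalizing τ with
  | nil => exact hW τ hτ subset_rfl rfl
  | cons p l ih =>
    refine (hl p List.mem_cons_self).isBalancedAt_stepW hdown hτ fun j hj => ?_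
    obtain ⟨hjτ, hjC⟩ := mem_coverRays.1 hj
    refine ih (fun q hq => hl q (List.mem_cons_of_mem p hq)) hjC fun ρ hρ hsub hcard => ?_
    rw [Finset.card_insert_of_notMem hjτ] at hcard
    exact hW ρ hρ ((Finset.subset_insert j τ).trans hsub) (by simp only [List.length_cons]; omega)

theorem foldr_stepW_apply (hdown : ∀ S ∈ C, ∀ T ⊆ S, T ∈ C)
    (l : List (Fin m × (Finset (Fin m) → ((Fin n → ℝ) →ₗ[ℝ] ℝ))))
    (hl : ∀ p ∈ l, IsCourant n m v C p.1 p.2) (hnodup : (l.map Prod.fst).Nodup)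
    {W : Finset (Fin m) → ℝ} {τ : Finset (Fin m)} (hτ : τ ∪ (l.map Prod.fst).toFinset ∈ C)
    (hdisj : ∀ p ∈ l, p.1 ∉ τ)
    (hW : ∀ ρ ∈ C, τ ⊆ ρ → ρ.card + 1 = τ.card + l.length → IsBalancedAt n m v C W ρ) :
    (l.map Prod.snd).foldr (stepW n m v C) W τ = W (τ ∪ (l.map Prod.fst).toFinset) := by
  induction l generalizing τ with
  | nil => simp
  | cons p l ih =>
    obtain ⟨i, L⟩ := p
    have hL : IsCourant n m v C i L := hl _ List.mem_cons_self
    simp only [List.map_cons, List.foldr_cons, List.toFinset_cons, List.nodup_cons,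
      List.mem_map, not_exists, not_and] at hnodup hτ ⊢
    have hiτ : i ∉ τ := hdisj _ List.mem_cons_self
    have hτC : τ ∈ C := hdown _ hτ _ Finset.subset_union_left
    have hiC : insert i τ ∈ C := hdown _ hτ _ 
      (Finset.insert_subset (by simp) Finset.subset_union_left)
    have hbal := isBalancedAt_foldr_stepW hdown l (fun q hq => hl q (List.mem_cons_of_mem _ hq))
      hτC (W := W) fun ρ hρ hsub hcard => hW ρ hρ hsub (by simp only [List.length_cons]; omega)
    have hrest : (l.map Prod.snd).foldr (stepW n m v C) W (insert i τ) =
        W (insert i τ ∪ (l.map Prod.fst).toFinset) :=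
      ih (fun q hq => hl q (List.mem_cons_of_mem _ hq)) hnodup.2
        (by rwa [Finset.insert_union, ← Finset.union_insert])
        (fun q hq => by
          rw [Finset.mem_insert, not_or]
          exact ⟨hnodup.1 q hq, hdisj q (List.mem_cons_of_mem _ hq)⟩)
        fun ρ hρ hsub hcard => hW ρ hρ ((Finset.subset_insert i τ).trans hsub) (by
          rw [Finset.card_insert_of_notMem hiτ] at hcard
          simp only [List.length_cons]
          omega)
    rw [hL.stepW_eq, if_pos (mem_coverRays.2 ⟨hiτ, hiC⟩), hL.apply_eq_zero hτC hiτ hbal, sub_zero,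
      hrest, Finset.insert_union, Finset.union_insert]

end

theorem stmt12_general (n m d : ℕ) (v : Fin m → Fin n → ℤ) (C : Finset (Finset (Fin m)))
    (ω : Finset (Fin m) → ℤ)
    (hdown : ∀ S ∈ C, ∀ T ⊆ S, T ∈ C)
    (hbal : ∀ τ ∈ C, τ.card = d - 1 →
      (∑ j ∈ Finset.univ.filter (fun j => j ∉ τ ∧ insert j τ ∈ C),
          (ω (insert j τ) : ℝ) • rayR n m v j) ∈
        Submodule.span ℝ (Set.range fun i : {x // x ∈ τ} => rayR n m v i.1))
    (σ : Finset (Fin m)) (hσ : σ ∈ C)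
    (ι : Fin d → Fin m) (hinj : Function.Injective ι)
    (himg : Finset.image ι Finset.univ = σ)
    -- the Courant functions `Ψ_{v_t}`, given by their linear parts on the cones of `C`
    (L : Fin d → Finset (Fin m) → ((Fin n → ℝ) →ₗ[ℝ] ℝ))
    (hL : ∀ t : Fin d, ∀ T ∈ C, ∀ j ∈ T,
      L t T (rayR n m v j) = if j = ι t then 1 else 0) :
    ((List.ofFn fun t : Fin d => L t).foldr (stepW n m v C)
        (fun T => (ω T : ℝ))) ∅ = (ω σ : ℝ) := by
  set l := List.ofFn fun t => (ι t, L t)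
  have hsnd : l.map Prod.snd = List.ofFn L := List.map_ofFn ..
  have hnodup : (l.map Prod.fst).Nodup := by
    rw [List.map_ofFn]
    exact List.nodup_ofFn.2 hinj
  have hfst : (l.map Prod.fst).toFinset = σ := by
    rw [← himg]
    ext
    simp [l]
  have hfold := foldr_stepW_apply hdown l (List.forall_mem_ofFn_iff.2 fun t => hL t) hnodup
    (W := fun T => (ω T : ℝ)) (τ := ∅)
    (by rwa [Finset.empty_union, hfst]) (by simp)
    fun ρ hρ _ hcard => hbal ρ hρ (by simp [l] at hcard; omega)
  rwa [hsnd, hfst, Finset.empty_union] at hfold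

/-- For a maximal cone `σ = ⟨v₁,…,v_d⟩` of a `d`-dimensional tropical fan with unimodular
fan structure, the iterated intersection product `Ψ_{v₁}⋯Ψ_{v_d}·X` of the Courant
functions of the rays of `σ` with the fan is the origin with weight `ω(σ)`. -/
theorem stmt12 (n m d : ℕ) (v : Fin m → Fin n → ℤ) (C : Finset (Finset (Fin m)))
    (ω : Finset (Fin m) → ℤ)
    (hdown : ∀ S ∈ C, ∀ T ⊆ S, T ∈ C)
    (hsimp : ∀ S ∈ C, LinearIndependent ℝ (fun i : {x // x ∈ S} => rayR n m v i.1))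
    (hUni : ∀ S ∈ C, ∃ (b : Module.Basis (Fin n) ℤ (Fin n → ℤ)) (g : Fin m → Fin n),
      ∀ i ∈ S, b (g i) = v i)
    (hdim : ∀ S ∈ C, S.card ≤ d)
    (hpure : ∀ S ∈ C, ∃ T ∈ C, S ⊆ T ∧ T.card = d)
    (hbal : ∀ τ ∈ C, τ.card = d - 1 →
      (∑ j ∈ Finset.univ.filter (fun j => j ∉ τ ∧ insert j τ ∈ C),
          (ω (insert j τ) : ℝ) • rayR n m v j) ∈
        Submodule.span ℝ (Set.range fun i : {x // x ∈ τ} => rayR n m v i.1))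
    (σ : Finset (Fin m)) (hσ : σ ∈ C) (hcard : σ.card = d)
    (ι : Fin d → Fin m) (hinj : Function.Injective ι)
    (himg : Finset.image ι Finset.univ = σ)
    -- the Courant functions `Ψ_{v_t}`, given by their linear parts on the cones of `C`
    (L : Fin d → Finset (Fin m) → ((Fin n → ℝ) →ₗ[ℝ] ℝ))
    (hL : ∀ t : Fin d, ∀ T ∈ C, ∀ j ∈ T,
      L t T (rayR n m v j) = if j = ι t then 1 else 0) :
    ((List.ofFn fun t : Fin d => L t).foldr (stepW n m v C)
        (fun T => (ω T : ℝ))) ∅ = (ω σ : ℝ) :=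
  stmt12_general n m d v C ω hdown hbal σ hσ ι hinj himg L hL
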